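/- arXiv:2504.14730 — 4 statements merged into one kernel-verified Lean document; each statement's English description precedes it below -/
import Mathlib

section
/- Let f be a symmetric piecewise-constant density on ℝ with f(z) = p_{|i|}/Δ for z in the interval I_i = ((i-½)Δ, (i+½)Δ) for |i| < N, and f(z) = (p_N/Δ) r^{|i|-N} on I_i for |i| ≥ N, where Δ > 0, r ∈ (0,1), and the normalization p₀ + 2Σ_{j=1}^{N-1} p_j + 2p_N/(1-r) = 1 holds. Then a random variable Z with density f has mean 0 and Var(Z) = Δ²/12 + 2Δ² Σ_{i=1}^{N-1} p_i i² + 2 p_N Δ² (r²(N-1)² + N²(1-2r) + r(2N+1))/(1-r)³. -/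
open MeasureTheory Set Function

/-! On the cell `I_i` the density is `m_i / Δ`, with `m_i` the mass of the cell, and
`∫_{I_i} z² dz = (i² + 1/12) Δ³`. The cells cover `ℝ` up to countably many endpoints, so the
second moment is `Δ² ∑ᵢ mᵢ (i² + 1/12)`; the tail `p_N ∑_k r^k ((k + N)² + 1/12)` of this
series is a combination of negative-binomial series, and the normalization turns
`(Δ² / 12) ∑ᵢ mᵢ` into `Δ² / 12`. The mean vanishes because the density is even. -/

lemma hasSum_geometric_mul_sq_add {r : ℝ} (hr : ‖r‖ < 1) (a b : ℝ) :
    HasSum (fun n : ℕ => r ^ n * (((n : ℝ) + a) ^ 2 + b))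
      ((a ^ 2 + b) / (1 - r) + 2 * a * r / (1 - r) ^ 2 + r * (1 + r) / (1 - r) ^ 3) := by
  have h1r : 1 - r ≠ 0 := sub_ne_zero.mpr (by rintro rfl; simp at hr)
  -- `(n + a) ^ 2 + b = 2 * (n + 2).choose 2 + (2 * a - 3) * n + (a ^ 2 + b - 2)`
  have h := (((hasSum_choose_mul_geometric_of_norm_lt_one 2 hr).mul_left 2).add
    ((hasSum_coe_mul_geometric_of_norm_lt_one hr).mul_left (2 * a - 3))).add
    ((hasSum_geometric_of_norm_lt_one hr).mul_left (a ^ 2 + b - 2))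
  rw [show (a ^ 2 + b) / (1 - r) + 2 * a * r / (1 - r) ^ 2 + r * (1 + r) / (1 - r) ^ 3 =
      2 * (1 / (1 - r) ^ (2 + 1)) + (2 * a - 3) * (r / (1 - r) ^ 2) + (a ^ 2 + b - 2) * (1 - r)⁻¹ by
    field_simp; ring]
  refine h.congr_fun fun n => ?_
  rw [Nat.cast_choose_two]
  push_cast
  ring

lemma integral_mul_eq_zero_of_ae_even {μ : Measure ℝ} [μ.IsNegInvariant] {f : ℝ → ℝ}
    (hf : ∀ᵐ z ∂μ, f (-z) = f z) : ∫ z, z * f z ∂μ = 0 := by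
  have h : ∫ z, z * f z ∂μ = -∫ z, z * f z ∂μ := calc
    ∫ z, z * f z ∂μ = ∫ z, -z * f (-z) ∂μ := (integral_neg_eq_self _ _).symm
    _ = ∫ z, -(z * f z) ∂μ := integral_congr_ae (by filter_upwards [hf] with z hz; rw [hz, neg_mul])
    _ = -∫ z, z * f z ∂μ := integral_neg _
  linarith

def cell (Δ : ℝ) (i : ℤ) : Set ℝ := Ioo (((i : ℝ) - 1 / 2) * Δ) (((i : ℝ) + 1 / 2) * Δ)

section cell

variable {Δ : ℝ}

lemma measurableSet_cell (i : ℤ) : MeasurableSet (cell Δ i) := measurableSet_Ioo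

lemma neg_mem_cell {i : ℤ} {z : ℝ} (hz : z ∈ cell Δ i) : -z ∈ cell Δ (-i) := by
  obtain ⟨h₁, h₂⟩ := hz
  constructor <;> push_cast <;> linarith

lemma pairwise_disjoint_cell (hΔ : 0 ≤ Δ) : Pairwise (Disjoint on (cell Δ)) := by
  have key : ∀ i j : ℤ, i < j → Disjoint (cell Δ i) (cell Δ j) := by
    intro i j hij
    have hle : (i : ℝ) + 1 / 2 ≤ j - 1 / 2 := by
      have : (i : ℝ) + 1 ≤ j := by exact_mod_cast hij
      linarith
    exact (Iio_disjoint_Ici (mul_le_mul_of_nonneg_right hle hΔ)).mono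
      Ioo_subset_Iio_self (Ioo_subset_Ioi_self.trans Ioi_subset_Ici_self)
  intro i j hij
  rcases hij.lt_or_gt with h | h
  exacts [key i j h, (key j i h).symm]

lemma ae_mem_iUnion_cell (hΔ : 0 < Δ) : ∀ᵐ z : ℝ, z ∈ ⋃ i, cell Δ i := by
  -- a point outside every cell is a left endpoint `(⌊z / Δ + 1 / 2⌋ - 1 / 2) * Δ`
  have hsub : (⋃ i, cell Δ i)ᶜ ⊆ range (fun i : ℤ => ((i : ℝ) - 1 / 2) * Δ) := by
    intro z hz
    set i := ⌊z / Δ + 1 / 2⌋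
    have h₁ : (i : ℝ) ≤ z / Δ + 1 / 2 := Int.floor_le _
    have h₂ : z / Δ + 1 / 2 < i + 1 := Int.lt_floor_add_one _
    have hz' : z / Δ * Δ = z := div_mul_cancel₀ z hΔ.ne'
    have hlow : ((i : ℝ) - 1 / 2) * Δ ≤ z := by nlinarith
    have hup : z < ((i : ℝ) + 1 / 2) * Δ := by nlinarith
    rcases hlow.eq_or_lt with h | h
    · exact ⟨i, h⟩
    · exact (hz (mem_iUnion.mpr ⟨i, h, hup⟩)).elim
  exact measure_mono_null hsub ((countable_range _).measure_zero _)

lemma integral_sq_cell (hΔ : 0 ≤ Δ) (i : ℤ) :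
    ∫ z in cell Δ i, z ^ 2 = ((i : ℝ) ^ 2 + 1 / 12) * Δ ^ 3 := by
  have hle : ((i : ℝ) - 1 / 2) * Δ ≤ ((i : ℝ) + 1 / 2) * Δ :=
    mul_le_mul_of_nonneg_right (by linarith) hΔ
  rw [cell, ← integral_Ioc_eq_integral_Ioo, ← intervalIntegral.integral_of_le hle, integral_pow]
  ring

lemma ae_even_of_eqOn_cell (hΔ : 0 < Δ) {f : ℝ → ℝ} {c : ℤ → ℝ}
    (hf : ∀ i, EqOn f (fun _ => c i) (cell Δ i)) (hc : ∀ i, c (-i) = c i) :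
    ∀ᵐ z, f (-z) = f z := by
  filter_upwards [ae_mem_iUnion_cell hΔ] with z hz
  obtain ⟨i, hi⟩ := mem_iUnion.mp hz
  exact (hf (-i) (neg_mem_cell hi)).trans ((hc i).trans (hf i hi).symm)

theorem integrable_sq_mul_and_integral_eq_of_eqOn_cell (hΔ : 0 < Δ) {f : ℝ → ℝ} {c : ℤ → ℝ}
    (hc : ∀ i, 0 ≤ c i) (hf : ∀ i, EqOn f (fun _ => c i) (cell Δ i)) {s : ℝ}
    (hs : HasSum (fun i => c i * (((i : ℝ) ^ 2 + 1 / 12) * Δ ^ 3)) s) :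
    Integrable (fun z => z ^ 2 * f z) ∧ ∫ z, z ^ 2 * f z = s := by
  have hcover : volume.restrict (⋃ i, cell Δ i) = volume :=
    Measure.restrict_eq_self_of_ae_mem (ae_mem_iUnion_cell hΔ)
  have hEq : ∀ i, EqOn (fun z => z ^ 2 * f z) (fun z => c i * z ^ 2) (cell Δ i) :=
    fun i z hz => by simp only [hf i hz]; ring
  have hint : ∀ i, IntegrableOn (fun z => z ^ 2 * f z) (cell Δ i) := fun i =>
    ((continuous_const.mul (continuous_pow 2)).integrableOn_Icc.mono_set
      Ioo_subset_Icc_self).congr_fun (hEq i).symm (measurableSet_cell i)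
  have hval : ∀ i, ∫ z in cell Δ i, z ^ 2 * f z = c i * (((i : ℝ) ^ 2 + 1 / 12) * Δ ^ 3) :=
    fun i => by
      rw [setIntegral_congr_fun (measurableSet_cell i) (hEq i), integral_const_mul,
        integral_sq_cell hΔ.le]
  have hnorm : ∀ i, ∫ z in cell Δ i, ‖z ^ 2 * f z‖ = ∫ z in cell Δ i, z ^ 2 * f z := fun i =>
    setIntegral_congr_fun (measurableSet_cell i) fun z hz =>
      Real.norm_of_nonneg (mul_nonneg (sq_nonneg z) ((hf i hz).symm ▸ hc i))
  have hIU : IntegrableOn (fun z => z ^ 2 * f z) (⋃ i, cell Δ i) :=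
    integrableOn_iUnion_of_summable_integral_norm hint
      (hs.summable.congr fun i => by rw [hnorm, hval])
  have hsum := hasSum_integral_iUnion measurableSet_cell (pairwise_disjoint_cell hΔ.le) hIU
  rw [IntegrableOn, hcover] at hIU
  rw [hcover] at hsum
  exact ⟨hIU, hsum.unique (hs.congr_fun hval)⟩

end cell

noncomputable def cellMass (N : ℕ) (r : ℝ) (p : ℕ → ℝ) (i : ℤ) : ℝ :=
  if i.natAbs < N then p i.natAbs else p N * r ^ (i.natAbs - N)

section cellMass

variable {N : ℕ} {r : ℝ} {p : ℕ → ℝ}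

lemma cellMass_neg (i : ℤ) : cellMass N r p (-i) = cellMass N r p i := by
  simp [cellMass]

lemma cellMass_nonneg (hr : 0 ≤ r) (hp : ∀ j, 0 ≤ p j) (i : ℤ) : 0 ≤ cellMass N r p i := by
  unfold cellMass
  split_ifs
  exacts [hp _, mul_nonneg (hp _) (pow_nonneg hr _)]

lemma cellMass_natCast_of_lt {n : ℕ} (hn : n < N) : cellMass N r p n = p n := by
  simp [cellMass, hn]

lemma cellMass_natCast_add (k : ℕ) : cellMass N r p ((k + N : ℕ) : ℤ) = p N * r ^ k := by
  rw [cellMass, Int.natAbs_natCast, if_neg (by omega), Nat.add_sub_cancel]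

lemma hasSum_cellMass_add_one_mul_sq_add (hr : ‖r‖ < 1) (M : ℕ) :
    HasSum (fun n : ℕ => cellMass (M + 1) r p (n + 1) * (((n + 1 : ℤ) : ℝ) ^ 2 + 1 / 12))
      (∑ i ∈ Finset.Icc 1 M, p i * ((i : ℝ) ^ 2 + 1 / 12)
        + p (M + 1) * (((M + 1 : ℝ) ^ 2 + 1 / 12) / (1 - r) + 2 * (M + 1) * r / (1 - r) ^ 2
          + r * (1 + r) / (1 - r) ^ 3)) := by
  set g := fun n : ℕ => cellMass (M + 1) r p n * ((n : ℝ) ^ 2 + 1 / 12)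
  set S := ∑ i ∈ Finset.Icc 1 M, p i * ((i : ℝ) ^ 2 + 1 / 12)
  set T := ((M + 1 : ℝ) ^ 2 + 1 / 12) / (1 - r) + 2 * (M + 1) * r / (1 - r) ^ 2
    + r * (1 + r) / (1 - r) ^ 3
  have htail : HasSum (fun k => g (k + (M + 1))) (p (M + 1) * T) := by
    refine ((hasSum_geometric_mul_sq_add hr (M + 1) (1 / 12)).mul_left (p (M + 1))).congr_fun
      fun k => ?_
    simp only [g, cellMass_natCast_add]
    push_cast
    ring
  have hhead : ∑ i ∈ Finset.range M, g (i + 1) = S := by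
    rw [Finset.range_eq_Ico, Finset.sum_Ico_add', zero_add, Finset.Ico_add_one_right_eq_Icc]
    refine Finset.sum_congr rfl fun i hi => ?_
    simp only [g, cellMass_natCast_of_lt (Nat.lt_succ_of_le (Finset.mem_Icc.mp hi).2)]
  have h : HasSum (fun n => g (n + 1)) (S + p (M + 1) * T) := by
    rw [← hasSum_nat_add_iff' M, hhead, add_sub_cancel_left]
    exact htail
  simp only [g] at h
  exact_mod_cast h

theorem hasSum_cellMass_mul_sq_add (hN : 1 ≤ N) (hr : ‖r‖ < 1)
    (hnorm : p 0 + 2 * ∑ j ∈ Finset.Icc 1 (N - 1), p j + 2 * p N / (1 - r) = 1) :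
    HasSum (fun i : ℤ => cellMass N r p i * ((i : ℝ) ^ 2 + 1 / 12))
      (1 / 12 + 2 * ∑ i ∈ Finset.Icc 1 (N - 1), p i * (i : ℝ) ^ 2
        + 2 * p N * (r ^ 2 * ((N : ℝ) - 1) ^ 2 + (N : ℝ) ^ 2 * (1 - 2 * r)
            + r * (2 * (N : ℝ) + 1)) / (1 - r) ^ 3) := by
  obtain ⟨M, rfl⟩ := Nat.exists_eq_add_of_le' hN
  simp only [Nat.add_sub_cancel] at hnorm ⊢
  have hpos := hasSum_cellMass_add_one_mul_sq_add (p := p) hr M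
  have hall := HasSum.of_add_one_of_neg_add_one
    (f := fun i : ℤ => cellMass (M + 1) r p i * ((i : ℝ) ^ 2 + 1 / 12)) hpos
    (hpos.congr_fun fun n => by simp only [cellMass_neg, Int.cast_neg, neg_sq])
  have h1r : 1 - r ≠ 0 := sub_ne_zero.mpr (by rintro rfl; simp at hr)
  have hp0 : p 0 = 1 - 2 * ∑ j ∈ Finset.Icc 1 M, p j - 2 * p (M + 1) / (1 - r) := by linarith
  convert hall using 1
  simp only [cellMass, Int.natAbs_zero, Nat.zero_lt_succ, if_true, Int.cast_zero, mul_add,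
    Finset.sum_add_distrib, ← Finset.sum_mul]
  rw [hp0]
  push_cast
  field_simp
  ring

end cellMass

/-- Mean and variance of the symmetric piecewise-constant density with geometric tails. -/
theorem piecewise_constant_mean_variance (N : ℕ) (hN : 1 ≤ N) (r : ℝ) (hr0 : 0 < r) (hr1 : r < 1)
    (Δ : ℝ) (hΔ : 0 < Δ) (p : ℕ → ℝ) (hp : ∀ j, 0 ≤ p j)
    (hnorm : p 0 + 2 * ∑ j ∈ Finset.Icc 1 (N - 1), p j + 2 * p N / (1 - r) = 1)
    (f : ℝ → ℝ)
    (hf : ∀ (i : ℤ) (z : ℝ), z ∈ Set.Ioo (((i : ℝ) - 1 / 2) * Δ) (((i : ℝ) + 1 / 2) * Δ) →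
      f z = (if i.natAbs < N then p i.natAbs else p N * r ^ (i.natAbs - N)) / Δ) :
    (∫ z : ℝ, z * f z) = 0 ∧
    Integrable (fun z : ℝ => z ^ 2 * f z) ∧
    (∫ z : ℝ, z ^ 2 * f z)
      = Δ ^ 2 / 12 + 2 * Δ ^ 2 * ∑ i ∈ Finset.Icc 1 (N - 1), p i * (i : ℝ) ^ 2
        + 2 * p N * Δ ^ 2 * (r ^ 2 * ((N : ℝ) - 1) ^ 2 + (N : ℝ) ^ 2 * (1 - 2 * r)
            + r * (2 * (N : ℝ) + 1)) / (1 - r) ^ 3 := by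
  have hcell : ∀ i, EqOn f (fun _ => cellMass N r p i / Δ) (cell Δ i) := fun i z hz => hf i z hz
  have hr : ‖r‖ < 1 := by rwa [Real.norm_of_nonneg hr0.le]
  have hsum := (hasSum_cellMass_mul_sq_add hN hr hnorm).mul_right (Δ ^ 2)
  obtain ⟨hint, hval⟩ := integrable_sq_mul_and_integral_eq_of_eqOn_cell hΔ
    (fun i => div_nonneg (cellMass_nonneg hr0.le hp i) hΔ.le) hcell
    (hsum.congr_fun fun i => by field_simp)
  refine ⟨integral_mul_eq_zero_of_ae_even
    (ae_even_of_eqOn_cell hΔ hcell fun i => by rw [cellMass_neg]), hint, ?_⟩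
  rw [hval]
  ring
end

section
/- For the (continuous) standard Laplace distribution Lap(0,t) with density f(x) = (1/(2t)) e^{-|x|/t}, the Rényi divergence of order α > 1 between Lap(0,t) and its shift Lap(s,t) (for s > 0) is D_α = (1/(α-1)) log( (α/(2α-1)) e^{(α-1)s/t} + ((α-1)/(2α-1)) e^{-αs/t} ). -/
/-!
The integrand is `(2t)⁻¹ exp (-(a|x| + b|x - s|))` with `a = α/t`, `b = (1 - α)/t`. Its exponent
is affine on each of `(-∞, 0]`, `[0, s]` and `[s, ∞)`, with slopes `a + b = 1/t`, `b - a` and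
`-(a + b)`, so the integral is a sum of three elementary exponential integrals.
-/

open Real Set MeasureTheory

theorem integral_exp_mul {c : ℝ} (hc : c ≠ 0) (a b : ℝ) :
    ∫ x in a..b, exp (c * x) = (exp (c * b) - exp (c * a)) / c := by
  rw [intervalIntegral.integral_comp_mul_left (fun x => exp x) hc, integral_exp, smul_eq_mul,
    inv_mul_eq_div]

theorem mul_exp_rpow_mul_mul_exp_rpow_one_sub {c : ℝ} (hc : 0 < c) (α u v : ℝ) :
    (c * exp u) ^ α * (c * exp v) ^ (1 - α) = c * exp (α * u + (1 - α) * v) := by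
  rw [mul_rpow hc.le (exp_pos u).le, mul_rpow hc.le (exp_pos v).le, ← exp_mul, ← exp_mul,
    exp_add, mul_mul_mul_comm, ← rpow_add hc, add_sub_cancel, rpow_one, mul_comm u, mul_comm v]

section AbsExp

variable {a b s x : ℝ}

theorem exp_neg_mul_abs_add_mul_abs_sub_of_nonpos (hs : 0 ≤ s) (hx : x ≤ 0) :
    exp (-(a * |x| + b * |x - s|)) = exp (-(b * s)) * exp ((a + b) * x) := by
  rw [abs_of_nonpos hx, abs_of_nonpos (by linarith), ← exp_add]
  ring_nf

theorem exp_neg_mul_abs_add_mul_abs_sub_of_mem_Icc (hx : x ∈ Icc 0 s) :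
    exp (-(a * |x| + b * |x - s|)) = exp (-(b * s)) * exp ((b - a) * x) := by
  rw [abs_of_nonneg hx.1, abs_of_nonpos (by linarith [hx.2]), ← exp_add]
  ring_nf

theorem exp_neg_mul_abs_add_mul_abs_sub_of_le (hs : 0 ≤ s) (hx : s ≤ x) :
    exp (-(a * |x| + b * |x - s|)) = exp (b * s) * exp (-(a + b) * x) := by
  rw [abs_of_nonneg (hs.trans hx), abs_of_nonneg (by linarith), ← exp_add]
  ring_nf

theorem integral_exp_neg_mul_abs_add_mul_abs_sub (hab : 0 < a + b) (hab' : a ≠ b) (hs : 0 ≤ s) :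
    ∫ x, exp (-(a * |x| + b * |x - s|)) =
      (exp (-(b * s)) + exp (-(a * s))) / (a + b) + (exp (-(b * s)) - exp (-(a * s))) / (a - b) := by
  set φ : ℝ → ℝ := fun x => exp (-(a * |x| + b * |x - s|))
  have left : EqOn φ (fun x => exp (-(b * s)) * exp ((a + b) * x)) (Iic 0) :=
    fun x hx => exp_neg_mul_abs_add_mul_abs_sub_of_nonpos hs hx
  have mid : EqOn φ (fun x => exp (-(b * s)) * exp ((b - a) * x)) (uIcc 0 s) := fun x hx =>
    exp_neg_mul_abs_add_mul_abs_sub_of_mem_Icc (by rwa [uIcc_of_le hs] at hx)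
  have right : EqOn φ (fun x => exp (b * s) * exp (-(a + b) * x)) (Ioi s) :=
    fun x hx => exp_neg_mul_abs_add_mul_abs_sub_of_le hs (le_of_lt hx)
  have hleft : IntegrableOn φ (Iic 0) :=
    IntegrableOn.congr_fun ((integrableOn_exp_mul_Iic hab 0).const_mul _) left.symm
      measurableSet_Iic
  have hright : IntegrableOn φ (Ioi s) :=
    IntegrableOn.congr_fun ((integrableOn_exp_mul_Ioi (by linarith : -(a + b) < 0) s).const_mul _)
      right.symm measurableSet_Ioi
  have hpos : IntegrableOn φ (Ioi 0) := by
    have hφ : Continuous φ := by fun_prop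
    rw [← Ioc_union_Ioi_eq_Ioi hs]
    exact (hφ.integrableOn_Icc.mono_set Ioc_subset_Icc_self).union hright
  rw [← intervalIntegral.integral_Iic_add_Ioi hleft hpos,
    ← intervalIntegral.integral_interval_add_Ioi hpos hright,
    setIntegral_congr_fun measurableSet_Iic left, intervalIntegral.integral_congr mid,
    setIntegral_congr_fun measurableSet_Ioi right, integral_const_mul, integral_const_mul,
    intervalIntegral.integral_const_mul, integral_exp_mul_Iic hab,
    integral_exp_mul (sub_ne_zero.2 hab'.symm), integral_exp_mul_Ioi (by linarith)]
  have hmid : exp (-(b * s)) * ((exp ((b - a) * s) - exp ((b - a) * 0)) / (b - a)) =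
      (exp (-(b * s)) - exp (-(a * s))) / (a - b) := by
    rw [mul_zero, exp_zero, mul_div_assoc', mul_sub, ← exp_add, ← neg_sub a b, div_neg, ← neg_div]
    ring_nf
  have hend : exp (b * s) * (-exp (-(a + b) * s) / -(a + b)) = exp (-(a * s)) / (a + b) := by
    rw [neg_div_neg_eq, mul_div_assoc', ← exp_add]
    ring_nf
  rw [hmid, hend, mul_zero, exp_zero]
  ring

end AbsExp

/-- Closed-form Rényi divergence of order `α > 1` between `Lap(0,t)` and `Lap(s,t)`. -/
theorem renyi_divergence_laplace (t s α : ℝ) (ht : 0 < t) (hs : 0 < s) (hα : 1 < α)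
    (f : ℝ → ℝ) (hf : ∀ x, f x = (1 / (2 * t)) * Real.exp (-|x| / t)) :
    (α - 1)⁻¹ * Real.log (∫ x : ℝ, f x ^ α * f (x - s) ^ (1 - α))
      = (α - 1)⁻¹ * Real.log
          ((α / (2 * α - 1)) * Real.exp ((α - 1) * s / t)
            + ((α - 1) / (2 * α - 1)) * Real.exp (-α * s / t)) := by
  have hintegrand : ∀ x, f x ^ α * f (x - s) ^ (1 - α) =
      1 / (2 * t) * exp (-(α / t * |x| + (1 - α) / t * |x - s|)) := fun x => by
    rw [hf, hf, mul_exp_rpow_mul_mul_exp_rpow_one_sub (by positivity)]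
    ring_nf
  have hsum : α / t + (1 - α) / t = 1 / t := by ring
  have hdiff : α / t - (1 - α) / t = (2 * α - 1) / t := by ring
  have h2α : 2 * α - 1 ≠ 0 := by linarith
  have hne : α / t ≠ (1 - α) / t := sub_ne_zero.1 (hdiff ▸ div_ne_zero h2α ht.ne')
  simp_rw [hintegrand]
  rw [integral_const_mul,
    integral_exp_neg_mul_abs_add_mul_abs_sub (hsum ▸ by positivity) hne hs.le, hsum, hdiff,
    show -((1 - α) / t * s) = (α - 1) * s / t by ring, show -(α / t * s) = -α * s / t by ring]
  congr 2
  field_simp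
  ring
end

section
/- For a piecewise-constant symmetric density with bins aligned to a grid of width Δ and sensitivity s a positive integer multiple of Δ, the maximum over t ∈ [-s,s] of the Rényi divergence D_α(f ∥ T_t f) (α > 1) is attained at some t in the finite set {Δ, 2Δ, …, s} of positive integer multiples of Δ. -/
/-!
For `t = mΔ + u` with `0 ≤ u ≤ Δ`, each bin of `f` meets bin `i - m - 1` of the shifted density
along a piece of length `u` and bin `i - m` along a piece of length `Δ - u`, so the Rényi moment
`M(t) = ∫ f^α f(· - t)^(1 - α)` is affine in `u` between consecutive grid points and is dominated
by its value at one of them. The divergence `log M / (α - 1)` is monotone in `M`, even in `t`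
because `f` is symmetric, zero at `t = 0`, and nonnegative since Hölder's inequality gives
`M ≥ 1`; hence its maximum over `[-s, s]` is attained on `{Δ, 2Δ, …, s}`.
-/

open MeasureTheory Set
open scoped ENNReal

theorem ENNReal.one_le_lintegral_rpow_mul_rpow {Ω : Type*} [MeasurableSpace Ω] {μ : Measure Ω}
    {F G : Ω → ℝ≥0∞} {α : ℝ} (hα : 1 < α) (hF : AEMeasurable F μ) (hG : AEMeasurable G μ)
    (hG0 : ∀ᵐ x ∂μ, G x ≠ 0) (hF1 : ∫⁻ x, F x ∂μ = 1) (hG1 : ∫⁻ x, G x ∂μ = 1) :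
    1 ≤ ∫⁻ x, F x ^ α * G x ^ (1 - α) ∂μ := by
  have hα0 : 0 < α := by linarith
  have hGtop : ∀ᵐ x ∂μ, G x ≠ ⊤ := (ae_lt_top' hG (by simp [hG1])).mono fun _ h => h.ne
  -- Hölder with exponents `α` and `α / (α - 1)` applied to
  -- `F = (F * G ^ ((1 - α) / α)) * G ^ ((α - 1) / α)`
  have holder := ENNReal.lintegral_mul_le_Lp_mul_Lq μ (Real.HolderConjugate.conjExponent hα)
    (f := fun x => F x * G x ^ ((1 - α) / α)) (g := fun x => G x ^ ((α - 1) / α))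
    (hF.mul (hG.pow_const _)) (hG.pow_const _)
  have hFG : ∫⁻ x, ((fun x => F x * G x ^ ((1 - α) / α)) * fun x => G x ^ ((α - 1) / α)) x ∂μ
      = 1 := by
    rw [← hF1]
    refine lintegral_congr_ae ?_
    filter_upwards [hG0, hGtop] with x h0 htop
    simp only [Pi.mul_apply]
    rw [mul_assoc, ← ENNReal.rpow_add _ _ h0 htop, ← add_div, sub_add_sub_cancel', sub_self,
      zero_div, ENNReal.rpow_zero, mul_one]
  have hFα : ∫⁻ x, (F x * G x ^ ((1 - α) / α)) ^ α ∂μ = ∫⁻ x, F x ^ α * G x ^ (1 - α) ∂μ := by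
    refine lintegral_congr fun x => ?_
    rw [ENNReal.mul_rpow_of_nonneg _ _ hα0.le, ← ENNReal.rpow_mul, div_mul_cancel₀ _ hα0.ne']
  have hG' : ∫⁻ x, (G x ^ ((α - 1) / α)) ^ α.conjExponent ∂μ = 1 := by
    have : (α - 1) / α * α.conjExponent = 1 := by
      have hα1 : α - 1 ≠ 0 := by linarith
      rw [Real.conjExponent]; field_simp
    simp_rw [← ENNReal.rpow_mul, this, ENNReal.rpow_one, hG1]
  rw [hFG, hFα, hG', ENNReal.one_rpow, mul_one] at holder
  by_contra! hlt
  exact holder.not_gt (ENNReal.rpow_lt_one hlt (by positivity))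

theorem ENNReal.mul_add_mul_le_or_of_ne_top {a b c d : ℝ≥0∞} (hc : c ≠ ⊤) (hd : d ≠ ⊤)
    (h : a * c + b * d ≠ ⊤) :
    (a * c + b * d ≤ a * (c + d) ∧ a * (c + d) ≠ ⊤) ∨
      (a * c + b * d ≤ b * (c + d) ∧ b * (c + d) ≠ ⊤) := by
  rcases eq_or_ne c 0 with rfl | hc0
  · simp only [mul_zero, zero_add] at h ⊢
    exact Or.inr ⟨le_rfl, h⟩
  rcases eq_or_ne d 0 with rfl | hd0
  · simp only [mul_zero, add_zero] at h ⊢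
    exact Or.inl ⟨le_rfl, h⟩
  have ha : a ≠ ⊤ := fun ha => h (by simp [ha, hc0])
  have hb : b ≠ ⊤ := fun hb => h (by simp [hb, hd0])
  have hcd : c + d ≠ ⊤ := ENNReal.add_ne_top.2 ⟨hc, hd⟩
  rcases le_total a b with hab | hab
  · refine Or.inr ⟨?_, ENNReal.mul_ne_top hb hcd⟩
    rw [mul_add]; gcongr
  · refine Or.inl ⟨?_, ENNReal.mul_ne_top ha hcd⟩
    rw [mul_add]; gcongr

lemma setLIntegral_Ioc_eq_of_eqOn_Ioo {g : ℝ → ℝ≥0∞} {a b : ℝ} {K : ℝ≥0∞}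
    (h : EqOn g (fun _ => K) (Ioo a b)) :
    ∫⁻ z in Ioc a b, g z = K * ENNReal.ofReal (b - a) := by
  rw [Measure.restrict_congr_set Ioo_ae_eq_Ioc.symm, setLIntegral_congr_fun measurableSet_Ioo h,
    setLIntegral_const, Real.volume_Ioo]

lemma ae_comp_sub_right {P : ℝ → Prop} (h : ∀ᵐ z, P z) (t : ℝ) : ∀ᵐ z, P (z - t) :=
  (measurePreserving_sub_right volume t).quasiMeasurePreserving.ae h

lemma exists_nat_lt_mem_Icc_mul {Δ t : ℝ} {k : ℕ} (hk : 1 ≤ k) (ht : t ∈ Icc 0 (k * Δ)) :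
    ∃ m : ℕ, m < k ∧ t ∈ Icc (m * Δ) ((m + 1) * Δ) := by
  induction k, hk using Nat.le_induction with
  | base => exact ⟨0, one_pos, by simpa using ht⟩
  | succ k hk ih =>
    by_cases htk : t ≤ k * Δ
    · obtain ⟨m, hmk, hm⟩ := ih ⟨ht.1, htk⟩
      exact ⟨m, hmk.trans k.lt_succ_self, hm⟩
    · exact ⟨k, k.lt_succ_self, (not_le.1 htk).le, by simpa using ht.2⟩

noncomputable def renyiMoment (f : ℝ → ℝ) (α t : ℝ) : ℝ≥0∞ :=
  ∫⁻ z, ENNReal.ofReal (f z ^ α * f (z - t) ^ (1 - α))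

section Moment

variable {α : ℝ} {f : ℝ → ℝ}

lemma integral_eq_toReal_renyiMoment (hint : Integrable f) (hf0 : 0 ≤ᵐ[volume] f) (t : ℝ) :
    ∫ z, f z ^ α * f (z - t) ^ (1 - α) = (renyiMoment f α t).toReal := by
  refine integral_eq_lintegral_of_nonneg_ae ?_ ?_
  · filter_upwards [hf0, ae_comp_sub_right hf0 t] with z h1 h2
    exact mul_nonneg (Real.rpow_nonneg h1 _) (Real.rpow_nonneg h2 _)
  · have hmt : AEMeasurable (fun z => f (z - t)) :=
      hint.aemeasurable.comp_quasiMeasurePreserving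
        (measurePreserving_sub_right volume t).quasiMeasurePreserving
    exact ((hint.aemeasurable.pow_const α).mul (hmt.pow_const _)).aestronglyMeasurable

lemma lintegral_ofReal_eq_one (hint : Integrable f) (hf0 : 0 ≤ᵐ[volume] f)
    (hdens : ∫ z, f z = 1) : ∫⁻ z, ENNReal.ofReal (f z) = 1 := by
  rw [← ofReal_integral_eq_lintegral_ofReal hint hf0, hdens, ENNReal.ofReal_one]

theorem renyiMoment_zero (hfpos : ∀ᵐ z, 0 < f z) (hint : Integrable f) (hdens : ∫ z, f z = 1) :
    renyiMoment f α 0 = 1 := by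
  rw [← lintegral_ofReal_eq_one hint (hfpos.mono fun _ h => h.le) hdens]
  refine lintegral_congr_ae ?_
  filter_upwards [hfpos] with z hz
  rw [sub_zero, ← Real.rpow_add hz, add_sub_cancel, Real.rpow_one]

theorem one_le_renyiMoment (hα : 1 < α) (hfpos : ∀ᵐ z, 0 < f z) (hint : Integrable f)
    (hdens : ∫ z, f z = 1) (t : ℝ) : 1 ≤ renyiMoment f α t := by
  have hone := lintegral_ofReal_eq_one hint (hfpos.mono fun _ h => h.le) hdens
  have hF := ENNReal.measurable_ofReal.comp_aemeasurable hint.aemeasurable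
  have hmoment : renyiMoment f α t = ∫⁻ z, ENNReal.ofReal (f z) ^ α *
      ENNReal.ofReal (f (z - t)) ^ (1 - α) := by
    refine lintegral_congr_ae ?_
    filter_upwards [hfpos, ae_comp_sub_right hfpos t] with z h1 h2
    rw [ENNReal.ofReal_mul (Real.rpow_nonneg h1.le _), ENNReal.ofReal_rpow_of_pos h1,
      ENNReal.ofReal_rpow_of_pos h2]
  rw [hmoment]
  refine ENNReal.one_le_lintegral_rpow_mul_rpow hα hF
    (hF.comp_quasiMeasurePreserving (measurePreserving_sub_right volume t).quasiMeasurePreserving)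
    ((ae_comp_sub_right hfpos t).mono fun _ h => ENNReal.ofReal_pos.2 h |>.ne') hone ?_
  rw [lintegral_sub_right_eq_self (fun z => ENNReal.ofReal (f z)) t, hone]

theorem renyiMoment_neg (heven : ∀ᵐ z, f (-z) = f z) (t : ℝ) :
    renyiMoment f α (-t) = renyiMoment f α t := by
  rw [renyiMoment, ← (Measure.measurePreserving_neg volume).lintegral_comp_emb
    (MeasurableEquiv.neg ℝ).measurableEmbedding]
  refine lintegral_congr_ae ?_
  filter_upwards [heven, ae_comp_sub_right heven t] with z h1 h2
  rw [neg_sub] at h2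
  rw [sub_neg_eq_add, neg_add_eq_sub, h1, h2]

end Moment

/-- An infinite moment gives divergence `0` (via `toReal ⊤ = 0`), just as the Bochner integral
of a non-integrable integrand is `0`. -/
noncomputable def shiftRenyiDiv (f : ℝ → ℝ) (α t : ℝ) : ℝ :=
  (α - 1)⁻¹ * Real.log (renyiMoment f α t).toReal

section Divergence

variable {α : ℝ} {f : ℝ → ℝ}

lemma shiftRenyiDiv_nonneg (hα : 1 < α) {t : ℝ} (h1 : 1 ≤ renyiMoment f α t) :
    0 ≤ shiftRenyiDiv f α t := by
  rcases eq_or_ne (renyiMoment f α t) ⊤ with htop | htop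
  · simp [shiftRenyiDiv, htop]
  · exact mul_nonneg (inv_nonneg.2 (by linarith))
      (Real.log_nonneg (by simpa using ENNReal.toReal_mono htop h1))

lemma shiftRenyiDiv_le_of_renyiMoment_le (hα : 1 < α) {t t' : ℝ}
    (h1 : 1 ≤ renyiMoment f α t) (hle : renyiMoment f α t ≤ renyiMoment f α t')
    (htop : renyiMoment f α t' ≠ ⊤) : shiftRenyiDiv f α t ≤ shiftRenyiDiv f α t' := by
  have hpos : 0 < (renyiMoment f α t).toReal :=
    ENNReal.toReal_pos (by positivity) (ne_top_of_le_ne_top htop hle)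
  exact mul_le_mul_of_nonneg_left (Real.log_le_log hpos (ENNReal.toReal_mono htop hle))
    (inv_nonneg.2 (by linarith))

lemma shiftRenyiDiv_zero (hfpos : ∀ᵐ z, 0 < f z) (hint : Integrable f)
    (hdens : ∫ z, f z = 1) : shiftRenyiDiv f α 0 = 0 := by
  rw [shiftRenyiDiv, renyiMoment_zero hfpos hint hdens, ENNReal.toReal_one, Real.log_one, mul_zero]

lemma shiftRenyiDiv_abs (heven : ∀ᵐ z, f (-z) = f z) (t : ℝ) :
    shiftRenyiDiv f α |t| = shiftRenyiDiv f α t := by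
  rcases abs_choice t with h | h <;> rw [h]
  rw [shiftRenyiDiv, renyiMoment_neg heven, shiftRenyiDiv]

end Divergence

def gridBin (Δ : ℝ) (i : ℤ) : Set ℝ := Ioo ((i - 1 / 2) * Δ) ((i + 1 / 2) * Δ)

lemma ae_exists_mem_gridBin {Δ : ℝ} (hΔ : 0 < Δ) : ∀ᵐ z : ℝ, ∃ i, z ∈ gridBin Δ i := by
  have hcover : ∀ z, z ∉ range (fun i : ℤ => (i + 1 / 2) * Δ) → ∃ i, z ∈ gridBin Δ i := by
    intro z hz
    have hlo := Int.floor_le (z / Δ + 1 / 2)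
    have hhi := Int.lt_floor_add_one (z / Δ + 1 / 2)
    refine ⟨⌊z / Δ + 1 / 2⌋, lt_of_le_of_ne ?_ fun h => hz ⟨⌊z / Δ + 1 / 2⌋ - 1, ?_⟩, ?_⟩
    · rw [← le_div_iff₀ hΔ]; linarith
    · push_cast; linarith
    · rw [← div_lt_iff₀ hΔ]; linarith
  rw [ae_iff]
  exact measure_mono_null (fun z hz => by_contra fun h => hz (hcover z h))
    ((countable_range _).measure_zero volume)

noncomputable def gridMoment (c : ℤ → ℝ) (α : ℝ) (m : ℤ) : ℝ≥0∞ :=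
  ∑' i, ENNReal.ofReal (c i ^ α * c (i - m) ^ (1 - α))

lemma lintegral_eq_tsum_gridCell {Δ : ℝ} (hΔ : 0 < Δ) (g : ℝ → ℝ≥0∞) :
    ∫⁻ z, g z = ∑' i : ℤ, ∫⁻ z in Ioc ((i - 1 / 2) * Δ) ((i + 1 / 2) * Δ), g z := by
  have hcell : ∀ i : ℤ, Ioc ((i - 1 / 2) * Δ) ((i + 1 / 2) * Δ)
      = Ioc (-(Δ / 2) + i • Δ) (-(Δ / 2) + (i + 1) • Δ) := fun i => by
    simp only [zsmul_eq_mul, Int.cast_add, Int.cast_one]; ring_nf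
  simp_rw [hcell]
  rw [← lintegral_iUnion (fun _ => measurableSet_Ioc) (pairwise_disjoint_Ioc_add_zsmul _ _),
    iUnion_Ioc_add_zsmul hΔ, Measure.restrict_univ]

section Grid

variable {Δ α : ℝ} {f : ℝ → ℝ} {c : ℤ → ℝ}

lemma ae_pos_of_gridBin (hΔ : 0 < Δ) (hf : ∀ i, ∀ z ∈ gridBin Δ i, f z = c i)
    (hc : ∀ i, 0 < c i) : ∀ᵐ z, 0 < f z := by
  filter_upwards [ae_exists_mem_gridBin hΔ] with z ⟨i, hi⟩
  exact hf i z hi ▸ hc i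

lemma ae_even_of_gridBin (hΔ : 0 < Δ) (hf : ∀ i, ∀ z ∈ gridBin Δ i, f z = c i)
    (hc : ∀ i, c (-i) = c i) : ∀ᵐ z, f (-z) = f z := by
  filter_upwards [ae_exists_mem_gridBin hΔ] with z ⟨i, hi⟩
  have hneg : -z ∈ gridBin Δ (-i) := by
    obtain ⟨h1, h2⟩ := hi
    constructor <;> push_cast <;> linarith
  rw [hf i z hi, hf (-i) (-z) hneg, hc]

lemma setLIntegral_gridCell_shift (hf : ∀ i, ∀ z ∈ gridBin Δ i, f z = c i) (i m : ℤ) {u : ℝ}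
    (hu0 : 0 ≤ u) (huΔ : u ≤ Δ) :
    ∫⁻ z in Ioc ((i - 1 / 2) * Δ) ((i + 1 / 2) * Δ),
        ENNReal.ofReal (f z ^ α * f (z - (m * Δ + u)) ^ (1 - α)) =
      ENNReal.ofReal (c i ^ α * c (i - (m + 1)) ^ (1 - α)) * ENNReal.ofReal u +
      ENNReal.ofReal (c i ^ α * c (i - m) ^ (1 - α)) * ENNReal.ofReal (Δ - u) := by
  have hlo : (i - 1 / 2) * Δ ≤ (i - 1 / 2) * Δ + u := by linarith
  have hhi : (i - 1 / 2) * Δ + u ≤ (i + 1 / 2) * Δ := by linarith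
  rw [← Ioc_union_Ioc_eq_Ioc hlo hhi,
    lintegral_union measurableSet_Ioc (Ioc_disjoint_Ioc_of_le le_rfl)]
  congr 1
  · rw [setLIntegral_Ioc_eq_of_eqOn_Ioo, add_sub_cancel_left]
    rintro z ⟨h1, h2⟩
    dsimp only
    rw [hf i z ⟨h1, by linarith⟩,
      hf (i - (m + 1)) _ ⟨by push_cast; linarith, by push_cast; linarith⟩]
  · rw [setLIntegral_Ioc_eq_of_eqOn_Ioo]
    · congr 2; ring
    rintro z ⟨h1, h2⟩
    dsimp only
    rw [hf i z ⟨by linarith, h2⟩, hf (i - m) _ ⟨by push_cast; linarith, by push_cast; linarith⟩]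

theorem renyiMoment_intCast_mul_add (hΔ : 0 < Δ) (hf : ∀ i, ∀ z ∈ gridBin Δ i, f z = c i)
    (m : ℤ) {u : ℝ} (hu0 : 0 ≤ u) (huΔ : u ≤ Δ) :
    renyiMoment f α (m * Δ + u) =
      gridMoment c α (m + 1) * ENNReal.ofReal u + gridMoment c α m * ENNReal.ofReal (Δ - u) := by
  rw [renyiMoment, lintegral_eq_tsum_gridCell hΔ]
  simp_rw [setLIntegral_gridCell_shift hf _ m hu0 huΔ]
  rw [ENNReal.tsum_add, ENNReal.tsum_mul_right, ENNReal.tsum_mul_right]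
  rfl

theorem renyiMoment_intCast_mul (hΔ : 0 < Δ) (hf : ∀ i, ∀ z ∈ gridBin Δ i, f z = c i) (m : ℤ) :
    renyiMoment f α (m * Δ) = gridMoment c α m * ENNReal.ofReal Δ := by
  simpa using renyiMoment_intCast_mul_add (α := α) hΔ hf m le_rfl hΔ.le

theorem renyiMoment_le_or_le_of_mem_Icc (hΔ : 0 < Δ) (hf : ∀ i, ∀ z ∈ gridBin Δ i, f z = c i)
    (m : ℤ) {t : ℝ} (ht : t ∈ Icc (m * Δ) ((m + 1) * Δ)) (htop : renyiMoment f α t ≠ ⊤) :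
    (renyiMoment f α t ≤ renyiMoment f α (m * Δ) ∧ renyiMoment f α (m * Δ) ≠ ⊤) ∨
      (renyiMoment f α t ≤ renyiMoment f α ((m + 1) * Δ) ∧
        renyiMoment f α ((m + 1) * Δ) ≠ ⊤) := by
  obtain ⟨u, hu0, huΔ, rfl⟩ : ∃ u, 0 ≤ u ∧ u ≤ Δ ∧ t = m * Δ + u :=
    ⟨t - m * Δ, by linarith [ht.1], by linarith [ht.2], by ring⟩
  have hsum : ENNReal.ofReal u + ENNReal.ofReal (Δ - u) = ENNReal.ofReal Δ := by
    rw [← ENNReal.ofReal_add hu0 (by linarith), add_sub_cancel]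
  have hright := renyiMoment_intCast_mul (α := α) hΔ hf (m + 1)
  rw [Int.cast_add, Int.cast_one] at hright
  rw [renyiMoment_intCast_mul hΔ hf, hright, ← hsum]
  rw [renyiMoment_intCast_mul_add hΔ hf m hu0 huΔ] at htop ⊢
  exact (ENNReal.mul_add_mul_le_or_of_ne_top ENNReal.ofReal_ne_top ENNReal.ofReal_ne_top
    htop).symm

theorem shiftRenyiDiv_le_or_le_of_mem_Icc (hΔ : 0 < Δ) (hα : 1 < α)
    (hf : ∀ i, ∀ z ∈ gridBin Δ i, f z = c i) (hone : ∀ t, 1 ≤ renyiMoment f α t)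
    (m : ℤ) {t : ℝ} (ht : t ∈ Icc (m * Δ) ((m + 1) * Δ)) :
    shiftRenyiDiv f α t ≤ shiftRenyiDiv f α (m * Δ) ∨
      shiftRenyiDiv f α t ≤ shiftRenyiDiv f α ((m + 1) * Δ) := by
  rcases eq_or_ne (renyiMoment f α t) ⊤ with htop | htop
  · left
    rw [shiftRenyiDiv, htop, ENNReal.toReal_top, Real.log_zero, mul_zero]
    exact shiftRenyiDiv_nonneg hα (hone _)
  rcases renyiMoment_le_or_le_of_mem_Icc hΔ hf m ht htop with ⟨hle, hfin⟩ | ⟨hle, hfin⟩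
  · exact Or.inl (shiftRenyiDiv_le_of_renyiMoment_le hα (hone t) hle hfin)
  · exact Or.inr (shiftRenyiDiv_le_of_renyiMoment_le hα (hone t) hle hfin)

theorem exists_le_shiftRenyiDiv_natCast_mul (hΔ : 0 < Δ) (hα : 1 < α)
    (hf : ∀ i, ∀ z ∈ gridBin Δ i, f z = c i) (hone : ∀ t, 1 ≤ renyiMoment f α t)
    {k : ℕ} (hk : 1 ≤ k) {t : ℝ} (ht : t ∈ Icc 0 (k * Δ)) :
    ∃ g ≤ k, shiftRenyiDiv f α t ≤ shiftRenyiDiv f α (g * Δ) := by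
  obtain ⟨m, hmk, hm⟩ := exists_nat_lt_mem_Icc_mul hk ht
  have hm' : t ∈ Icc (((m : ℤ) : ℝ) * Δ) ((((m : ℤ) : ℝ) + 1) * Δ) := by simpa using hm
  rcases shiftRenyiDiv_le_or_le_of_mem_Icc hΔ hα hf hone m hm' with h | h
  · exact ⟨m, hmk.le, by simpa using h⟩
  · exact ⟨m + 1, hmk, by simpa using h⟩

end Grid

/-- For a symmetric piecewise-constant density with bins of width `Δ` and sensitivity
`s = kΔ` a positive integer multiple of `Δ`, the worst-case Rényi divergence over shifts
`t ∈ [-s,s]` is attained at some positive integer multiple of `Δ` in `{Δ, 2Δ, …, s}`. -/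
theorem worst_case_shift_on_grid (Δ α s : ℝ) (hΔ : 0 < Δ) (hα : 1 < α)
    (k : ℕ) (hk : 1 ≤ k) (hs : s = (k : ℝ) * Δ)
    (p : ℕ → ℝ) (hp : ∀ j, 0 < p j)
    (f : ℝ → ℝ)
    (hf : ∀ (i : ℤ) (z : ℝ), z ∈ Set.Ioo (((i : ℝ) - 1 / 2) * Δ) (((i : ℝ) + 1 / 2) * Δ) →
      f z = p i.natAbs / Δ)
    (hint : Integrable f) (hdens : (∫ z : ℝ, f z) = 1)
    (D : ℝ → ℝ)
    (hD : ∀ t, D t = (α - 1)⁻¹ * Real.log (∫ z : ℝ, f z ^ α * f (z - t) ^ (1 - α))) :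
    ∃ j ∈ Finset.Icc 1 k, ∀ t ∈ Set.Icc (-s) s, D t ≤ D ((j : ℝ) * Δ) := by
  have hfpos : ∀ᵐ z, 0 < f z := ae_pos_of_gridBin hΔ hf fun i => div_pos (hp _) hΔ
  have hone := one_le_renyiMoment hα hfpos hint hdens
  obtain rfl : D = shiftRenyiDiv f α := funext fun t => by
    rw [hD, integral_eq_toReal_renyiMoment hint (hfpos.mono fun _ h => h.le), shiftRenyiDiv]
  obtain ⟨j₀, hj₀, hmax⟩ := Finset.exists_max_image (Finset.Icc 1 k)
    (fun j : ℕ => shiftRenyiDiv f α (j * Δ)) ⟨1, Finset.mem_Icc.2 ⟨le_rfl, hk⟩⟩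
  refine ⟨j₀, hj₀, fun t ht => ?_⟩
  have habs : |t| ∈ Icc 0 (k * Δ) := ⟨abs_nonneg t, hs ▸ abs_le.2 ht⟩
  obtain ⟨g, hgk, hg⟩ := exists_le_shiftRenyiDiv_natCast_mul hΔ hα hf hone hk habs
  rw [shiftRenyiDiv_abs (ae_even_of_gridBin hΔ hf fun i => by rw [Int.natAbs_neg])] at hg
  refine hg.trans ?_
  rcases Nat.eq_zero_or_pos g with rfl | hg0
  · rw [Nat.cast_zero, zero_mul, shiftRenyiDiv_zero hfpos hint hdens]
    exact shiftRenyiDiv_nonneg hα (hone _)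
  · exact hmax g (Finset.mem_Icc.2 ⟨hg0, hgk⟩)
end

section
/- Let P be the symmetric geometric-tail PMF on ℤ given by P(i) = p_{|i|} for |i| ≤ N and P(i) = p_N r^{|i|-N} for |i| > N, with all p_i > 0 and r ∈ (0,1). Then for α > 1 with r^{1-α} · r^α well-defined and an integer shift a with 1 ≤ a ≤ N, the series Σ_{i∈ℤ} P(i)^α P(i-a)^{1-α} converges if and only if r^{α} · r^{-(α-1)} summand tails converge, which holds always (since the tail terms behave like r^{|i|}), and its value equals (p_N r/(1-r))(r^{(1-α)a} + r^{α a}) + Σ_{j=-N}^{N-a} p_{|a+j|}^α p_{|j|}^{1-α} + p_N^α r^{α(a-N)} Σ_{j=N-a+1}^{N} r^{αj} p_{|j|}^{1-α} + p_N^{1-α} r^{-N(1-α)} Σ_{j=-a-N}^{-N-1} p_{|a+j|}^α r^{-j(1-α)}. -/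
/-!
After the shift `i = a + j` the summand is `P(a+j)^α P(j)^(1-α)`. For `j > N` and for
`j < -a-N` both factors lie in the geometric tail, where the summand collapses to `p_N` times a
power of `r` that grows by one with each step outwards, so the two tails are geometric series.
What remains is the finite window `[-a-N, N]`, split at `-N` and `N-a+1` according to which of
the two factors lies in the tail.
-/

open Finset

section IntTails

variable {M : Type*} [AddCommMonoid M] [TopologicalSpace M] {f : ℤ → M} {s : M}

theorem hasSum_indicator_Ioi_iff (n : ℤ) :
    HasSum ((Set.Ioi n).indicator f) s ↔ HasSum (fun k : ℕ => f (n + 1 + k)) s := by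
  have hinj : Function.Injective (fun k : ℕ => n + 1 + k) := fun _ _ h => by simpa using h
  have hrange : Set.range (fun k : ℕ => n + 1 + k) = Set.Ioi n := by
    ext j
    refine ⟨?_, fun hj => ⟨(j - n - 1).toNat, ?_⟩⟩
    · rintro ⟨k, rfl⟩; simp only [Set.mem_Ioi]; omega
    · simp only [Set.mem_Ioi] at hj
      show n + 1 + ((j - n - 1).toNat : ℤ) = j
      omega
  rw [← hasSum_subtype_iff_indicator, ← hrange]
  exact hinj.hasSum_range_iff

theorem hasSum_indicator_Iio_iff (m : ℤ) :
    HasSum ((Set.Iio m).indicator f) s ↔ HasSum (fun k : ℕ => f (m - 1 - k)) s := by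
  have hinj : Function.Injective (fun k : ℕ => m - 1 - k) := fun _ _ h => by simpa using h
  have hrange : Set.range (fun k : ℕ => m - 1 - k) = Set.Iio m := by
    ext j
    refine ⟨?_, fun hj => ⟨(m - 1 - j).toNat, ?_⟩⟩
    · rintro ⟨k, rfl⟩; simp only [Set.mem_Iio]; omega
    · simp only [Set.mem_Iio] at hj
      show m - 1 - ((m - 1 - j).toNat : ℤ) = j
      omega
  rw [← hasSum_subtype_iff_indicator, ← hrange]
  exact hinj.hasSum_range_iff

theorem hasSum_int_of_hasSum_tails [ContinuousAdd M] {m n : ℤ} {L R : M} (hmn : m ≤ n + 1)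
    (hL : HasSum (fun k : ℕ => f (m - 1 - k)) L) (hR : HasSum (fun k : ℕ => f (n + 1 + k)) R) :
    HasSum f (L + ∑ j ∈ Icc m n, f j + R) := by
  have hmid : HasSum ((Set.Icc m n).indicator f) (∑ j ∈ Icc m n, f j) := by
    rw [← hasSum_subtype_iff_indicator, ← coe_Icc]
    exact (Icc m n).hasSum f
  convert (((hasSum_indicator_Iio_iff m).2 hL).add hmid).add
    ((hasSum_indicator_Ioi_iff n).2 hR) using 1
  funext j
  simp only [Set.indicator_apply, Set.mem_Iio, Set.mem_Icc, Set.mem_Ioi]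
  split_ifs <;> first | omega | simp

end IntTails

theorem Finset.sum_Icc_int_consecutive {M : Type*} [AddCommMonoid M] (f : ℤ → M) {a b c : ℤ}
    (hab : a ≤ b) (hbc : b ≤ c + 1) :
    ∑ j ∈ Icc a (b - 1), f j + ∑ j ∈ Icc b c, f j = ∑ j ∈ Icc a c, f j := by
  rw [← sum_union (disjoint_left.2 fun j h₁ h₂ => by simp only [mem_Icc] at h₁ h₂; omega)]
  congr 1
  ext j
  simp only [mem_union, mem_Icc]
  omega

noncomputable def geometricTail (N : ℕ) (r : ℝ) (p : ℕ → ℝ) (i : ℤ) : ℝ :=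
  if i.natAbs ≤ N then p i.natAbs else p N * r ^ (i.natAbs - N)

namespace geometricTail

variable {N : ℕ} {r : ℝ} {p : ℕ → ℝ}

theorem of_natAbs_le {i : ℤ} (h : i.natAbs ≤ N) : geometricTail N r p i = p i.natAbs :=
  if_pos h

theorem of_le_natAbs {i : ℤ} (h : N ≤ i.natAbs) :
    geometricTail N r p i = p N * r ^ (|(i : ℝ)| - N) := by
  have habs : |(i : ℝ)| = i.natAbs := by rw [Nat.cast_natAbs, Int.cast_abs]
  unfold geometricTail
  split_ifs with hi
  · rw [habs, le_antisymm hi h, sub_self, Real.rpow_zero, mul_one]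
  · rw [habs, ← Nat.cast_sub h, Real.rpow_natCast]

theorem rpow_of_le_natAbs (hp : 0 ≤ p N) (hr : 0 < r) {i : ℤ} (h : N ≤ i.natAbs) (e : ℝ) :
    geometricTail N r p i ^ e = p N ^ e * r ^ (e * (|(i : ℝ)| - N)) := by
  rw [of_le_natAbs h, Real.mul_rpow hp (Real.rpow_nonneg hr.le _), ← Real.rpow_mul hr.le,
    mul_comm e]

theorem rpow_mul_rpow_one_sub_of_le_natAbs (hp : 0 ≤ p N) (hr : 0 < r) {i j : ℤ}
    (hi : N ≤ i.natAbs) (hj : N ≤ j.natAbs) (α : ℝ) :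
    geometricTail N r p i ^ α * geometricTail N r p j ^ (1 - α)
      = p N * r ^ (α * (|(i : ℝ)| - N) + (1 - α) * (|(j : ℝ)| - N)) := by
  rw [rpow_of_le_natAbs hp hr hi, rpow_of_le_natAbs hp hr hj, mul_mul_mul_comm,
    ← Real.rpow_add' hp (by norm_num), ← Real.rpow_add hr, add_sub_cancel, Real.rpow_one]

theorem hasSum_right_tail (hp : 0 ≤ p N) (hr0 : 0 < r) (hr1 : r < 1) (α : ℝ) (a : ℕ) :
    HasSum (fun k : ℕ => geometricTail N r p (a + (N + 1 + k)) ^ α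
        * geometricTail N r p (N + 1 + k) ^ (1 - α))
      (p N * r ^ (α * a) * r * (1 - r)⁻¹) := by
  refine ((hasSum_geometric_of_lt_one hr0.le hr1).mul_left _).congr_fun fun k => ?_
  have hexp : α * (|(((a + (N + 1 + k) : ℤ)) : ℝ)| - N) + (1 - α) * (|((N + 1 + k : ℤ) : ℝ)| - N)
      = α * a + 1 + k := by
    push_cast
    rw [abs_of_nonneg (by positivity), abs_of_nonneg (by positivity)]
    ring
  rw [rpow_mul_rpow_one_sub_of_le_natAbs hp hr0 (by omega) (by omega), hexp,
    Real.rpow_add hr0, Real.rpow_add hr0, Real.rpow_one, Real.rpow_natCast]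
  ring

theorem hasSum_left_tail (hp : 0 ≤ p N) (hr0 : 0 < r) (hr1 : r < 1) (α : ℝ) (a : ℕ) :
    HasSum (fun k : ℕ => geometricTail N r p (a + (-a - N - 1 - k)) ^ α
        * geometricTail N r p (-a - N - 1 - k) ^ (1 - α))
      (p N * r ^ ((1 - α) * a) * r * (1 - r)⁻¹) := by
  refine ((hasSum_geometric_of_lt_one hr0.le hr1).mul_left _).congr_fun fun k => ?_
  have hexp : α * (|(((a + (-a - N - 1 - k) : ℤ)) : ℝ)| - N)
      + (1 - α) * (|((-a - N - 1 - k : ℤ) : ℝ)| - N) = (1 - α) * a + 1 + k := by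
    push_cast
    rw [abs_of_nonpos (by linarith [(k.cast_nonneg : (0:ℝ) ≤ k)]),
      abs_of_nonpos (by linarith [(k.cast_nonneg : (0:ℝ) ≤ k), (a.cast_nonneg : (0:ℝ) ≤ a)])]
    ring
  rw [rpow_mul_rpow_one_sub_of_le_natAbs hp hr0 (by omega) (by omega), hexp,
    Real.rpow_add hr0, Real.rpow_add hr0, Real.rpow_one, Real.rpow_natCast]
  ring

theorem sum_Icc_left_block (hp : 0 ≤ p N) (hr : 0 < r) (α : ℝ) {a : ℕ} (ha : a ≤ N) :
    ∑ j ∈ Icc (-(a : ℤ) - N) (-(N : ℤ) - 1),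
        geometricTail N r p (a + j) ^ α * geometricTail N r p j ^ (1 - α)
      = p N ^ (1 - α) * r ^ (-(N : ℝ) * (1 - α))
        * ∑ j ∈ Icc (-(a : ℤ) - N) (-(N : ℤ) - 1),
            p ((a : ℤ) + j).natAbs ^ α * r ^ (-(j : ℝ) * (1 - α)) := by
  rw [mul_sum]
  refine sum_congr rfl fun j hj => ?_
  rw [mem_Icc] at hj
  have hj' : (j : ℝ) ≤ -N - 1 := by exact_mod_cast hj.2
  rw [of_natAbs_le (i := a + j) (by omega), rpow_of_le_natAbs (i := j) hp hr (by omega),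
    abs_of_neg (by linarith), show (1 - α) * (-j - N) = -N * (1 - α) + -j * (1 - α) by ring,
    Real.rpow_add hr]
  ring

theorem sum_Icc_center_block (α : ℝ) (a : ℕ) :
    ∑ j ∈ Icc (-(N : ℤ)) (N - a),
        geometricTail N r p (a + j) ^ α * geometricTail N r p j ^ (1 - α)
      = ∑ j ∈ Icc (-(N : ℤ)) (N - a), p ((a : ℤ) + j).natAbs ^ α * p j.natAbs ^ (1 - α) := by
  refine sum_congr rfl fun j hj => ?_
  rw [mem_Icc] at hj
  rw [of_natAbs_le (by omega), of_natAbs_le (by omega)]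

theorem sum_Icc_right_block (hp : 0 ≤ p N) (hr : 0 < r) (α : ℝ) {a : ℕ} (ha : a ≤ N) :
    ∑ j ∈ Icc ((N : ℤ) - a + 1) N,
        geometricTail N r p (a + j) ^ α * geometricTail N r p j ^ (1 - α)
      = p N ^ α * r ^ (α * ((a : ℝ) - N))
        * ∑ j ∈ Icc ((N : ℤ) - a + 1) N, r ^ (α * (j : ℝ)) * p j.natAbs ^ (1 - α) := by
  rw [mul_sum]
  refine sum_congr rfl fun j hj => ?_
  rw [mem_Icc] at hj
  have hj' : (N : ℝ) - a + 1 ≤ j := by exact_mod_cast hj.1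
  rw [of_natAbs_le (i := j) (by omega), rpow_of_le_natAbs (i := a + j) hp hr (by omega),
    Int.cast_add, Int.cast_natCast, abs_of_pos (by linarith),
    show α * (a + j - N) = α * (a - N) + α * j by ring, Real.rpow_add hr]
  ring

end geometricTail

theorem geometric_tail_renyi_sum_general (N : ℕ) (r : ℝ) (hr0 : 0 < r) (hr1 : r < 1)
    (α : ℝ) (a : ℕ) (haN : a ≤ N)
    (p : ℕ → ℝ) (hp : ∀ j, 0 < p j)
    (P : ℤ → ℝ)
    (hP : ∀ i : ℤ, P i = if i.natAbs ≤ N then p i.natAbs else p N * r ^ (i.natAbs - N)) :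
    HasSum (fun i : ℤ => P i ^ α * P (i - (a : ℤ)) ^ (1 - α))
      ((p N * r / (1 - r)) * (r ^ ((1 - α) * (a : ℝ)) + r ^ (α * (a : ℝ)))
        + ∑ j ∈ Finset.Icc (-(N : ℤ)) ((N : ℤ) - (a : ℤ)),
            p ((a : ℤ) + j).natAbs ^ α * p j.natAbs ^ (1 - α)
        + p N ^ α * r ^ (α * ((a : ℝ) - (N : ℝ)))
            * ∑ j ∈ Finset.Icc ((N : ℤ) - (a : ℤ) + 1) (N : ℤ),
                r ^ (α * (j : ℝ)) * p j.natAbs ^ (1 - α)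
        + p N ^ (1 - α) * r ^ (-(N : ℝ) * (1 - α))
            * ∑ j ∈ Finset.Icc (-(a : ℤ) - (N : ℤ)) (-(N : ℤ) - 1),
                p ((a : ℤ) + j).natAbs ^ α * r ^ (-(j : ℝ) * (1 - α))) := by
  obtain rfl : P = geometricTail N r p := funext hP
  have hpN := (hp N).le
  have hsum := hasSum_int_of_hasSum_tails
    (f := fun j => geometricTail N r p (a + j) ^ α * geometricTail N r p j ^ (1 - α))
    (m := -a - N) (n := N) (by omega)
    (geometricTail.hasSum_left_tail hpN hr0 hr1 α a)
    (geometricTail.hasSum_right_tail hpN hr0 hr1 α a)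
  rw [← sum_Icc_int_consecutive _ (a := -a - N) (b := -N) (c := N) (by omega) (by omega),
    ← sum_Icc_int_consecutive _ (a := -N) (b := N - a + 1) (c := N) (by omega) (by omega),
    add_sub_cancel_right,
    geometricTail.sum_Icc_left_block hpN hr0 α haN, geometricTail.sum_Icc_center_block,
    geometricTail.sum_Icc_right_block hpN hr0 α haN] at hsum
  rw [← (Equiv.addLeft (a : ℤ)).hasSum_iff]
  convert hsum using 1
  · funext j
    simp
  · ring

/-- Closed-form finite-dimensional expression for the Rényi-divergence objective of the
symmetric geometric-tail PMF family: the series `∑ᵢ P(i)^α P(i-a)^(1-α)` converges and its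
value is given explicitly. -/
theorem geometric_tail_renyi_sum (N : ℕ) (hN : 1 ≤ N) (r : ℝ) (hr0 : 0 < r) (hr1 : r < 1)
    (α : ℝ) (hα : 1 < α) (a : ℕ) (ha1 : 1 ≤ a) (haN : a ≤ N)
    (p : ℕ → ℝ) (hp : ∀ j, 0 < p j)
    (P : ℤ → ℝ)
    (hP : ∀ i : ℤ, P i = if i.natAbs ≤ N then p i.natAbs else p N * r ^ (i.natAbs - N)) :
    HasSum (fun i : ℤ => P i ^ α * P (i - (a : ℤ)) ^ (1 - α))
      ((p N * r / (1 - r)) * (r ^ ((1 - α) * (a : ℝ)) + r ^ (α * (a : ℝ)))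
        + ∑ j ∈ Finset.Icc (-(N : ℤ)) ((N : ℤ) - (a : ℤ)),
            p ((a : ℤ) + j).natAbs ^ α * p j.natAbs ^ (1 - α)
        + p N ^ α * r ^ (α * ((a : ℝ) - (N : ℝ)))
            * ∑ j ∈ Finset.Icc ((N : ℤ) - (a : ℤ) + 1) (N : ℤ),
                r ^ (α * (j : ℝ)) * p j.natAbs ^ (1 - α)
        + p N ^ (1 - α) * r ^ (-(N : ℝ) * (1 - α))
            * ∑ j ∈ Finset.Icc (-(a : ℤ) - (N : ℤ)) (-(N : ℤ) - 1),
                p ((a : ℤ) + j).natAbs ^ α * r ^ (-(j : ℝ) * (1 - α))) :=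
  geometric_tail_renyi_sum_general N r hr0 hr1 α a haN p hp P hP
end
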